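/- Soundness of the annotated system: if the annotated typing judgment Γ ⊩ a : S θ is derivable, then the implicit type assignment judgment Γ ⊢ |a| : |S| θ is derivable, where |·| is annotation erasure. -/

import Mathlib

set_option autoImplicit false

/-! # Effects -/

inductive Eff : Type
  | tot  -- ↓
  | gen  -- ?
  deriving DecidableEq

/-- Subeffect relation: ↓ ≤ ? and θ ≤ θ. -/
inductive SubEff : Eff → Eff → Prop
  | ax : SubEff .tot .gen
  | refl (θ : Eff) : SubEff θ θ

/-! # Terms of Teqt (implicit language), de Bruijn representation -/

inductive Tm : Type
  | var : ℕ → Tm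
  | app : Tm → Tm → Tm
  | lam : Tm → Tm          -- λx.t, binds index 0 in t
  | zero : Tm
  | suc : Tm → Tm
  | join : Tm
  | terminates : Tm
  | contra : Tm
  | abort : Tm
  | fix : Tm → Tm          -- rec f(x) = t : binds f (index 1) and x (index 0) in t
  | case : Tm → Tm → Tm → Tm

namespace Tm

/-- Shift free de Bruijn indices ≥ c up by one. -/
def liftAt (c : ℕ) : Tm → Tm
  | .var n => if n < c then .var n else .var (n + 1)
  | .app t u => .app (t.liftAt c) (u.liftAt c)
  | .lam t => .lam (t.liftAt (c + 1))
  | .zero => .zero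
  | .suc t => .suc (t.liftAt c)
  | .join => .join
  | .terminates => .terminates
  | .contra => .contra
  | .abort => .abort
  | .fix t => .fix (t.liftAt (c + 2))
  | .case t u v => .case (t.liftAt c) (u.liftAt c) (v.liftAt c)

/-- Shift all free indices up by n. -/
def liftN (n : ℕ) (t : Tm) : Tm := (liftAt 0)^[n] t

/-- Capture-avoiding substitution of `s` for index `k` (indices above `k` are decremented),
    `t.substAt k s` is [s / k] t. -/
def substAt (k : ℕ) : Tm → Tm → Tm
  | .var n, s => if n < k then .var n else if n = k then s else .var (n - 1)
  | .app t u, s => .app (t.substAt k s) (u.substAt k s)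
  | .lam t, s => .lam (t.substAt (k + 1) (s.liftAt 0))
  | .zero, _ => .zero
  | .suc t, s => .suc (t.substAt k s)
  | .join, _ => .join
  | .terminates, _ => .terminates
  | .contra, _ => .contra
  | .abort, _ => .abort
  | .fix t, s => .fix (t.substAt (k + 2) ((s.liftAt 0).liftAt 0))
  | .case t u v, s => .case (t.substAt k s) (u.substAt k s) (v.substAt k s)
termination_by t _ => sizeOf t

/-- Free variables (de Bruijn indices free in the term). -/
def fv : Tm → Finset ℕ
  | .var n => {n}
  | .app t u => t.fv ∪ u.fv
  | .lam t => (t.fv.filter (fun n => 1 ≤ n)).image (· - 1)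
  | .zero => ∅
  | .suc t => t.fv
  | .join => ∅
  | .terminates => ∅
  | .contra => ∅
  | .abort => ∅
  | .fix t => (t.fv.filter (fun n => 2 ≤ n)).image (· - 2)
  | .case t u v => t.fv ∪ u.fv ∪ v.fv

end Tm

/-! # Call-by-value operational semantics -/

inductive IsVal : Tm → Prop
  | var (n : ℕ) : IsVal (.var n)
  | zero : IsVal .zero
  | suc {v : Tm} : IsVal v → IsVal (.suc v)
  | lam (t : Tm) : IsVal (.lam t)
  | fix (t : Tm) : IsVal (.fix t)
  | join : IsVal .join
  | terminates : IsVal .terminates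
  | contra : IsVal .contra

/-- Evaluation contexts C ::= [] | Suc C | C t | v C | case C t t'. -/
inductive Ctx : Type
  | hole : Ctx
  | suc : Ctx → Ctx
  | appL : Ctx → Tm → Ctx
  | appR : (v : Tm) → IsVal v → Ctx → Ctx
  | case : Ctx → Tm → Tm → Ctx

def Ctx.plug : Ctx → Tm → Tm
  | .hole, t => t
  | .suc C, t => .suc (C.plug t)
  | .appL C u, t => .app (C.plug t) u
  | .appR v _ C, t => .app v (C.plug t)
  | .case C u w, t => .case (C.plug t) u w

/-- Primitive β-reduction. -/
inductive Beta : Tm → Tm → Prop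
  | appAbs {t v : Tm} : IsVal v → Beta (.app (.lam t) v) (t.substAt 0 v)
  | caseZero {t t' : Tm} : Beta (.case .zero t t') t
  | caseSuc {v t t' : Tm} : IsVal v → Beta (.case (.suc v) t t') (.app t' v)
  | appFix {t v : Tm} :
      IsVal v → Beta (.app (.fix t) v) ((t.substAt 0 (v.liftAt 0)).substAt 0 (.fix t))

/-- Small-step reduction t ↝ t'. -/
inductive Step : Tm → Tm → Prop
  | ctxt {t t' : Tm} (C : Ctx) : Beta t t' → Step (C.plug t) (C.plug t')
  | abort (C : Ctx) : Step (C.plug .abort) .abort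

/-- Multi-step reduction t ↝* t'. -/
def Steps : Tm → Tm → Prop := Relation.ReflTransGen Step

/-! # Types of Teqt -/

inductive Ty : Type
  | nat : Ty
  | pi : Eff → Ty → Ty → Ty   -- Π^θ x:T.T', binds index 0 in the second type
  | eq : Tm → Tm → Ty
  | term : Tm → Ty            -- Terminates t

namespace Ty

def liftAt (c : ℕ) : Ty → Ty
  | .nat => .nat
  | .pi θ T T' => .pi θ (T.liftAt c) (T'.liftAt (c + 1))
  | .eq t t' => .eq (t.liftAt c) (t'.liftAt c)
  | .term t => .term (t.liftAt c)

def liftN (n : ℕ) (T : Ty) : Ty := (liftAt 0)^[n] T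

def substAt (k : ℕ) (s : Tm) : Ty → Ty
  | .nat => .nat
  | .pi θ T T' => .pi θ (T.substAt k s) (T'.substAt (k + 1) (s.liftAt 0))
  | .eq t t' => .eq (t.substAt k s) (t'.substAt k s)
  | .term t => .term (t.substAt k s)
termination_by T => sizeOf T

/-- Number of type constructors (terms do not count). -/
def size : Ty → ℕ
  | .nat => 1
  | .pi _ T T' => T.size + T'.size + 1
  | .eq _ _ => 1
  | .term _ => 1

theorem size_liftAt (T : Ty) : ∀ c, (T.liftAt c).size = T.size := by
  induction T with
  | nat => intro c; rfl
  | pi θ T T' ih ih' => intro c; simp [Ty.liftAt, Ty.size, ih, ih']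
  | eq t t' => intro c; rfl
  | term t => intro c; rfl

end Ty

/-! # Type assignment for the implicit language -/

abbrev TCtx := List Ty

/-- The type of the termination hypothesis `p` of rule T_RecNat,
    in scope Γ, f, x (so f = var 3 resp. x = var 1 under the two Π-binders):
    Π^↓ x₁:nat. Π^↓ p':(x = Suc x₁). Terminates (f x₁). -/
def pNatTy : Ty :=
  .pi .tot .nat (.pi .tot (.eq (.var 1) (.suc (.var 0))) (.term (.app (.var 3) (.var 1))))

mutual
  /-- Context well-formedness Γ ⊢ Ok. -/
  inductive Ok : TCtx → Prop
    | empty : Ok []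
    | cons {Γ : TCtx} {T : Ty} : Ok Γ → WfTy Γ T → Ok (T :: Γ)

  /-- Type well-formedness Γ ⊢ T. -/
  inductive WfTy : TCtx → Ty → Prop
    | nat {Γ : TCtx} : Ok Γ → WfTy Γ .nat
    | pi {Γ : TCtx} {θ : Eff} {T T' : Ty} : WfTy (T :: Γ) T' → WfTy Γ (.pi θ T T')
    | eq {Γ : TCtx} {t t' : Tm} {T T' : Ty} :
        HasType Γ t T .gen → HasType Γ t' T' .gen → WfTy Γ (.eq t t')
    | term {Γ : TCtx} {t : Tm} {T : Ty} : HasType Γ t T .gen → WfTy Γ (.term t)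

  /-- Type assignment Γ ⊢ t : T θ. -/
  inductive HasType : TCtx → Tm → Ty → Eff → Prop
    | var {Γ : TCtx} {x : ℕ} {T : Ty} {θ : Eff} :
        Γ[x]? = some T → Ok Γ → HasType Γ (.var x) (T.liftN (x + 1)) θ
    | join {Γ : TCtx} {t t' t₀ : Tm} {T T' : Ty} {θ : Eff} :
        Steps t t₀ → Steps t' t₀ → HasType Γ t T .gen → HasType Γ t' T' .gen →
        HasType Γ .join (.eq t t') θ
    | conv {Γ : TCtx} {t t' t₁ t₂ : Tm} {T : Ty} {θ : Eff} :
        HasType Γ t (T.substAt 0 t₂) θ → HasType Γ t' (.eq t₁ t₂) .tot →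
        WfTy Γ (T.substAt 0 t₁) → HasType Γ t (T.substAt 0 t₁) θ
    | reflect {Γ : TCtx} {t t' : Tm} {T : Ty} {θ : Eff} :
        HasType Γ t T .gen → HasType Γ t' (.term t) .tot → HasType Γ t T θ
    | reify {Γ : TCtx} {t : Tm} {T : Ty} {θ : Eff} :
        HasType Γ t T .tot → HasType Γ .terminates (.term t) θ
    | ctxTerm {Γ : TCtx} {t t' : Tm} {θ : Eff} (C : Ctx) :
        HasType Γ t (.term (C.plug t')) θ → HasType Γ t (.term t') θ
    | abs {Γ : TCtx} {t : Tm} {T T' : Ty} {ρ θ : Eff} :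
        HasType (T' :: Γ) t T ρ → WfTy Γ (.pi ρ T' T) → HasType Γ (.lam t) (.pi ρ T' T) θ
    | app {Γ : TCtx} {t t' : Tm} {T T' : Ty} {ρ θ : Eff} :
        HasType Γ t (.pi ρ T' T) θ → HasType Γ t' T' θ → SubEff ρ θ →
        HasType Γ (.app t t') (T.substAt 0 t') θ
    | zero {Γ : TCtx} {θ : Eff} : Ok Γ → HasType Γ .zero .nat θ
    | suc {Γ : TCtx} {t : Tm} {θ : Eff} : HasType Γ t .nat θ → HasType Γ (.suc t) .nat θ
    | fix {Γ : TCtx} {t : Tm} {T T' : Ty} {θ : Eff} :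
        HasType (T'.liftAt 0 :: .pi .gen T' T :: Γ) t (T.liftAt 1) .gen →
        HasType Γ (.fix t) (.pi .gen T' T) θ
    | fixNat {Γ : TCtx} {t : Tm} {T : Ty} {θ : Eff} :
        HasType (pNatTy :: .nat :: .pi .gen .nat T :: Γ) (t.liftAt 0)
          ((T.liftAt 1).liftAt 0) .tot →
        HasType Γ (.fix t) (.pi .tot .nat T) θ
    | case {Γ : TCtx} {t t' t'' : Tm} {T : Ty} {ρ θ : Eff} :
        HasType Γ t .nat θ → HasType Γ t' (T.substAt 0 .zero) θ →
        HasType Γ t'' (.pi ρ .nat ((T.liftAt 1).substAt 0 (.suc (.var 0)))) θ → SubEff ρ θ →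
        HasType Γ (.case t t' t'') (T.substAt 0 t) θ
    | contra {Γ : TCtx} {t t' : Tm} {T : Ty} {θ : Eff} :
        HasType Γ t (.eq .zero (.suc t')) .tot → HasType Γ .contra T θ
    | abort {Γ : TCtx} {T : Ty} : Ok Γ → HasType Γ .abort T .gen
end

/-! # The annotated language -/

mutual
  inductive ATy : Type
    | nat : ATy
    | pi : Eff → ATy → ATy → ATy   -- binds index 0 in the second type
    | eq : ATm → ATm → ATy
    | term : ATm → ATy

  inductive ATm : Type
    | var : ℕ → ATm
    | app : ATm → ATm → ATm
    | lam : Eff → ATy → ATm → ATm        -- λ^θ x:S. a, binds index 0 in a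
    | zero : ATm
    | suc : ATm → ATm
    | join : ATm → ATm → ATm             -- join a a'
    | conv : ATy → ATm → ATm → ATm       -- conv x.S a a' (binds index 0 in S); subject a, proof a'
    | reflect : ATm → ATm → ATm          -- reflect a a'
    | terminates : ATm → ATm             -- terminates a
    | inv : ATm → ATm → ATm              -- inv a a'
    | contra : ATy → ATm → ATm           -- contra S a
    | abort : ATy → ATm                  -- abort S
    | fixNat : ATy → ATm → ATm           -- rec_nat f(x p) : S = a ; S binds x, a binds f (1), x (0)
    | fix : ATy → ATy → ATm → ATm        -- rec f(x:S) : S' = a ; S' binds x, a binds f (1), x (0)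
    | case : ATy → ATm → ATm → ATm → ATm -- case x.S a a' a'' (binds index 0 in S)
end

mutual
  def ATm.liftAt (c : ℕ) : ATm → ATm
    | .var n => if n < c then .var n else .var (n + 1)
    | .app a b => .app (a.liftAt c) (b.liftAt c)
    | .lam θ S a => .lam θ (S.liftAt c) (a.liftAt (c + 1))
    | .zero => .zero
    | .suc a => .suc (a.liftAt c)
    | .join a b => .join (a.liftAt c) (b.liftAt c)
    | .conv S a b => .conv (S.liftAt (c + 1)) (a.liftAt c) (b.liftAt c)
    | .reflect a b => .reflect (a.liftAt c) (b.liftAt c)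
    | .terminates a => .terminates (a.liftAt c)
    | .inv a b => .inv (a.liftAt c) (b.liftAt c)
    | .contra S a => .contra (S.liftAt c) (a.liftAt c)
    | .abort S => .abort (S.liftAt c)
    | .fixNat S a => .fixNat (S.liftAt (c + 1)) (a.liftAt (c + 2))
    | .fix S S' a => .fix (S.liftAt c) (S'.liftAt (c + 1)) (a.liftAt (c + 2))
    | .case S a b d => .case (S.liftAt (c + 1)) (a.liftAt c) (b.liftAt c) (d.liftAt c)

  def ATy.liftAt (c : ℕ) : ATy → ATy
    | .nat => .nat
    | .pi θ S S' => .pi θ (S.liftAt c) (S'.liftAt (c + 1))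
    | .eq a b => .eq (a.liftAt c) (b.liftAt c)
    | .term a => .term (a.liftAt c)
end

def ATy.liftN (n : ℕ) (S : ATy) : ATy := (ATy.liftAt 0)^[n] S

mutual
  /-- `a.substAt k s` is [s / k] a. -/
  def ATm.substAt (k : ℕ) : ATm → ATm → ATm
    | .var n, s => if n < k then .var n else if n = k then s else .var (n - 1)
    | .app a b, s => .app (a.substAt k s) (b.substAt k s)
    | .lam θ S a, s => .lam θ (S.substAt k s) (a.substAt (k + 1) (s.liftAt 0))
    | .zero, _ => .zero
    | .suc a, s => .suc (a.substAt k s)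
    | .join a b, s => .join (a.substAt k s) (b.substAt k s)
    | .conv S a b, s => .conv (S.substAt (k + 1) (s.liftAt 0)) (a.substAt k s) (b.substAt k s)
    | .reflect a b, s => .reflect (a.substAt k s) (b.substAt k s)
    | .terminates a, s => .terminates (a.substAt k s)
    | .inv a b, s => .inv (a.substAt k s) (b.substAt k s)
    | .contra S a, s => .contra (S.substAt k s) (a.substAt k s)
    | .abort S, s => .abort (S.substAt k s)
    | .fixNat S a, s =>
        .fixNat (S.substAt (k + 1) (s.liftAt 0)) (a.substAt (k + 2) ((s.liftAt 0).liftAt 0))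
    | .fix S S' a, s =>
        .fix (S.substAt k s) (S'.substAt (k + 1) (s.liftAt 0))
          (a.substAt (k + 2) ((s.liftAt 0).liftAt 0))
    | .case S a b d, s =>
        .case (S.substAt (k + 1) (s.liftAt 0)) (a.substAt k s) (b.substAt k s) (d.substAt k s)

  /-- `S.substAt k s` is [s / k] S. -/
  def ATy.substAt (k : ℕ) : ATy → ATm → ATy
    | .nat, _ => .nat
    | .pi θ S S', s => .pi θ (S.substAt k s) (S'.substAt (k + 1) (s.liftAt 0))
    | .eq a b, s => .eq (a.substAt k s) (b.substAt k s)
    | .term a, s => .term (a.substAt k s)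
end

mutual
  /-- Annotation erasure on terms. -/
  def eraseTm : ATm → Tm
    | .var n => .var n
    | .app a b => .app (eraseTm a) (eraseTm b)
    | .lam _ _ a => .lam (eraseTm a)
    | .zero => .zero
    | .suc a => .suc (eraseTm a)
    | .join _ _ => .join
    | .conv _ a _ => eraseTm a
    | .reflect a _ => eraseTm a
    | .terminates _ => .terminates
    | .inv a _ => eraseTm a
    | .contra _ _ => .contra
    | .abort _ => .abort
    | .fixNat _ a => .fix (eraseTm a)
    | .fix _ _ a => .fix (eraseTm a)
    | .case _ a b d => .case (eraseTm a) (eraseTm b) (eraseTm d)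

  /-- Annotation erasure on types. -/
  def eraseTy : ATy → Ty
    | .nat => .nat
    | .pi θ S S' => .pi θ (eraseTy S) (eraseTy S')
    | .eq a b => .eq (eraseTm a) (eraseTm b)
    | .term a => .term (eraseTm a)
end

/-- The annotated type of the termination hypothesis `p` of rule A_RecNat. -/
def pATy : ATy :=
  .pi .tot .nat (.pi .tot (.eq (.var 1) (.suc (.var 0))) (.term (.app (.var 3) (.var 1))))

mutual
  /-- Annotated context well-formedness Γ ⊩ Ok. -/
  inductive AOk : List ATy → Prop
    | empty : AOk []
    | cons {Γ : List ATy} {S : ATy} : AOk Γ → AWfTy Γ S → AOk (S :: Γ)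

  /-- Annotated type well-formedness Γ ⊩ S. -/
  inductive AWfTy : List ATy → ATy → Prop
    | nat {Γ : List ATy} : AOk Γ → AWfTy Γ .nat
    | pi {Γ : List ATy} {θ : Eff} {S S' : ATy} :
        AWfTy Γ S → AWfTy (S :: Γ) S' → AWfTy Γ (.pi θ S S')
    | eq {Γ : List ATy} {a a' : ATm} {S S' : ATy} :
        AHasType Γ a S .gen → AHasType Γ a' S' .gen → AWfTy Γ S → AWfTy Γ S' →
        AWfTy Γ (.eq a a')
    | term {Γ : List ATy} {a : ATm} {S : ATy} : AHasType Γ a S .gen → AWfTy Γ (.term a)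

  /-- Annotated typing Γ ⊩ a : S θ. -/
  inductive AHasType : List ATy → ATm → ATy → Eff → Prop
    | var {Γ : List ATy} {x : ℕ} {S : ATy} {θ : Eff} :
        Γ[x]? = some S → AOk Γ → AHasType Γ (.var x) (S.liftN (x + 1)) θ
    | join {Γ : List ATy} {a a' : ATm} {S S' : ATy} {t : Tm} {θ : Eff} :
        Steps (eraseTm a) t → Steps (eraseTm a') t →
        AHasType Γ a S .gen → AHasType Γ a' S' .gen →
        AHasType Γ (.join a a') (.eq a a') θ
    | conv {Γ : List ATy} {a a' a₁ a₂ : ATm} {S : ATy} {θ : Eff} :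
        AHasType Γ a (S.substAt 0 a₂) θ → AHasType Γ a' (.eq a₁ a₂) .tot →
        AWfTy Γ (S.substAt 0 a₁) →
        AHasType Γ (.conv S a a') (S.substAt 0 a₁) θ
    | reflect {Γ : List ATy} {a a' : ATm} {S : ATy} {θ : Eff} :
        AHasType Γ a S .gen → AHasType Γ a' (.term a) .tot →
        AHasType Γ (.reflect a a') S θ
    | reify {Γ : List ATy} {a : ATm} {S : ATy} {θ : Eff} :
        AHasType Γ a S .tot → AHasType Γ (.terminates a) (.term a) θ
    | ctxTerm {Γ : List ATy} {a a' a'' : ATm} {θ : Eff} (C : Ctx) :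
        AHasType Γ a (.term a'') θ → eraseTm a'' = C.plug (eraseTm a') →
        AHasType Γ (.inv a a') (.term a') θ
    | abs {Γ : List ATy} {a : ATm} {S S' : ATy} {ρ θ : Eff} :
        AHasType (S' :: Γ) a S ρ → AWfTy Γ (.pi ρ S' S) →
        AHasType Γ (.lam ρ S' a) (.pi ρ S' S) θ
    | app {Γ : List ATy} {a a' : ATm} {S S' : ATy} {ρ θ : Eff} :
        AHasType Γ a (.pi ρ S' S) θ → AHasType Γ a' S' θ → SubEff ρ θ →
        AHasType Γ (.app a a') (S.substAt 0 a') θ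
    | zero {Γ : List ATy} {θ : Eff} : AOk Γ → AHasType Γ .zero .nat θ
    | suc {Γ : List ATy} {a : ATm} {θ : Eff} :
        AHasType Γ a .nat θ → AHasType Γ (.suc a) .nat θ
    | fix {Γ : List ATy} {a : ATm} {S S' : ATy} {θ : Eff} :
        AHasType (S'.liftAt 0 :: .pi .gen S' S :: Γ) a (S.liftAt 1) .gen →
        AHasType Γ (.fix S' S a) (.pi .gen S' S) θ
    | fixNat {Γ : List ATy} {a : ATm} {S : ATy} {θ : Eff} :
        AHasType (pATy :: .nat :: .pi .gen .nat S :: Γ) (a.liftAt 0)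
          ((S.liftAt 1).liftAt 0) .tot →
        AHasType Γ (.fixNat S a) (.pi .tot .nat S) θ
    | case {Γ : List ATy} {a a' a'' : ATm} {S : ATy} {ρ θ : Eff} :
        AHasType Γ a .nat θ → AHasType Γ a' (S.substAt 0 .zero) θ →
        AHasType Γ a'' (.pi ρ .nat ((S.liftAt 1).substAt 0 (.suc (.var 0)))) θ → SubEff ρ θ →
        AHasType Γ (.case S a a' a'') (S.substAt 0 a) θ
    | contra {Γ : List ATy} {a a' : ATm} {S : ATy} {θ : Eff} :
        AHasType Γ a (.eq .zero (.suc a')) .tot → AHasType Γ (.contra S a) S θ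
    | abort {Γ : List ATy} {S : ATy} : AOk Γ → AHasType Γ (.abort S) S .gen
end

/-! # Simple types and simple-type assignment -/

inductive STy : Type
  | nat : STy
  | arrow : STy → STy → STy

/-- Simple-type assignment Σ ⊢ t : A. -/
inductive SHasType : List STy → Tm → STy → Prop
  | var {Sg : List STy} {x : ℕ} {A : STy} : Sg[x]? = some A → SHasType Sg (.var x) A
  | abs {Sg : List STy} {A1 A2 : STy} {t : Tm} :
      SHasType (A1 :: Sg) t A2 → SHasType Sg (.lam t) (.arrow A1 A2)
  | app {Sg : List STy} {A1 A2 : STy} {t1 t2 : Tm} :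
      SHasType Sg t1 (.arrow A2 A1) → SHasType Sg t2 A2 → SHasType Sg (.app t1 t2) A1
  | zero {Sg : List STy} : SHasType Sg .zero .nat
  | suc {Sg : List STy} {t : Tm} : SHasType Sg t .nat → SHasType Sg (.suc t) .nat
  | fix {Sg : List STy} {A : STy} {t : Tm} :
      SHasType (.nat :: .arrow .nat A :: Sg) t A → SHasType Sg (.fix t) (.arrow .nat A)
  | case {Sg : List STy} {A : STy} {t t' t'' : Tm} :
      SHasType Sg t .nat → SHasType Sg t' A → SHasType Sg t'' (.arrow .nat A) →
      SHasType Sg (.case t t' t'') A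
  | abort {Sg : List STy} {A : STy} : SHasType Sg .abort A

/-! # Formulas of the theory W' -/

inductive Fm : Type
  | tru : Fm
  | all : STy → Fm → Fm   -- ∀x:A.F, binds index 0 in F
  | imp : Fm → Fm → Fm
  | and : Fm → Fm → Fm
  | term : Tm → Fm        -- Terminates t
  | eq : Tm → Tm → Fm

namespace Fm

def liftAt (c : ℕ) : Fm → Fm
  | .tru => .tru
  | .all A F => .all A (F.liftAt (c + 1))
  | .imp F F' => .imp (F.liftAt c) (F'.liftAt c)
  | .and F F' => .and (F.liftAt c) (F'.liftAt c)
  | .term t => .term (t.liftAt c)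
  | .eq t t' => .eq (t.liftAt c) (t'.liftAt c)

/-- `F.substAt k s` is [s / k] F. -/
def substAt (k : ℕ) : Fm → Tm → Fm
  | .tru, _ => .tru
  | .all A F, s => .all A (F.substAt (k + 1) (s.liftAt 0))
  | .imp F F', s => .imp (F.substAt k s) (F'.substAt k s)
  | .and F F', s => .and (F.substAt k s) (F'.substAt k s)
  | .term t, s => .term (t.substAt k s)
  | .eq t t', s => .eq (t.substAt k s) (t'.substAt k s)

end Fm

/-! # Proof rules of the theory W' : the judgment Σ ; H ⊢ F -/

inductive Prove : List STy → List Fm → Fm → Prop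
  | assume {Sg : List STy} {H : List Fm} {F : Fm} : F ∈ H → Prove Sg H F
  | alli {Sg : List STy} {H : List Fm} {F : Fm} {A : STy} :
      Prove (A :: Sg) (H.map (Fm.liftAt 0)) F → Prove Sg H (.all A F)
  | alle {Sg : List STy} {H : List Fm} {F : Fm} {A : STy} {t : Tm} :
      Prove Sg H (.all A F) → SHasType Sg t A → Prove Sg H (F.substAt 0 t)
  | impi {Sg : List STy} {H : List Fm} {F F' : Fm} :
      Prove Sg (F :: H) F' → Prove Sg H (.imp F F')
  | impe {Sg : List STy} {H : List Fm} {F F' : Fm} :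
      Prove Sg H (.imp F F') → Prove Sg H F → Prove Sg H F'
  | andi {Sg : List STy} {H : List Fm} {F F' : Fm} :
      Prove Sg H F → Prove Sg H F' → Prove Sg H (.and F F')
  | ande1 {Sg : List STy} {H : List Fm} {F F' : Fm} :
      Prove Sg H (.and F F') → Prove Sg H F
  | ande2 {Sg : List STy} {H : List Fm} {F F' : Fm} :
      Prove Sg H (.and F F') → Prove Sg H F'
  | truei {Sg : List STy} {H : List Fm} : Prove Sg H .tru
  | contra {Sg : List STy} {H : List Fm} {F : Fm} {t : Tm} :
      Prove Sg H (.eq .zero (.suc t)) → Prove Sg H F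
  | ind {Sg : List STy} {H : List Fm} {F : Fm} :
      Prove Sg H (F.substAt 0 .zero) →
      Prove (.nat :: Sg) (.term (.var 0) :: F :: H.map (Fm.liftAt 0))
        ((F.liftAt 1).substAt 0 (.suc (.var 0))) →
      Prove Sg H (.all .nat (.imp (.term (.var 0)) F))
  | compInd {Sg : List STy} {H : List Fm} {F : Fm} {A A' : STy} {t : Tm} :
      -- F is scoped in z :: x :: Σ (z = index 0 is the distinguished variable)
      Prove (.arrow A' A :: Sg)
        ((.all A' ((F.liftAt 2).substAt 0 (.app (.var 1) (.var 0)))) :: H.map (Fm.liftAt 0))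
        (.all A' ((F.liftAt 2).substAt 0 t)) →
      SHasType Sg (.fix t) (.arrow A' A) →
      Prove Sg H (.all A' (.imp (.term (.app ((Tm.fix t).liftAt 0) (.var 0)))
        (F.substAt 0 (.app ((Tm.fix t).liftAt 0) (.var 0)))))
  | term0 {Sg : List STy} {H : List Fm} : Prove Sg H (.term .zero)
  | termS {Sg : List STy} {H : List Fm} {t : Tm} :
      Prove Sg H (.term t) → Prove Sg H (.term (.suc t))
  | termAbs {Sg : List STy} {H : List Fm} {t : Tm} : Prove Sg H (.term (.lam t))
  | termRec {Sg : List STy} {H : List Fm} {t : Tm} : Prove Sg H (.term (.fix t))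
  | termInv {Sg : List STy} {H : List Fm} {t : Tm} (C : Ctx) :
      Prove Sg H (.term (C.plug t)) → Prove Sg H (.term t)
  | notTermAbort {Sg : List STy} {H : List Fm} {F : Fm} :
      Prove Sg H (.term .abort) → Prove Sg H F
  | opsem {Sg : List STy} {H : List Fm} {t t' : Tm} :
      Steps t t' → Prove Sg H (.eq t t')
  | subst {Sg : List STy} {H : List Fm} {t t' : Tm} {F : Fm} :
      Prove Sg H (.eq t t') → Prove Sg H (F.substAt 0 t) → Prove Sg H (F.substAt 0 t')

/-! # The computational and logical translations -/

/-- Computational translation of terms ⟦t⟧^C : join, terminates, contra ↦ 0. -/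
def compile : Tm → Tm
  | .var n => .var n
  | .app t u => .app (compile t) (compile u)
  | .lam t => .lam (compile t)
  | .zero => .zero
  | .suc t => .suc (compile t)
  | .join => .zero
  | .terminates => .zero
  | .contra => .zero
  | .abort => .abort
  | .fix t => .fix (compile t)
  | .case t u v => .case (compile t) (compile u) (compile v)

/-- Computational translation of types ⟦T⟧^C. -/
def compileTy : Ty → STy
  | .nat => .nat
  | .pi _ T T' => .arrow (compileTy T) (compileTy T')
  | .eq _ _ => .nat
  | .term _ => .nat

/-- ⟦·⟧^L_θ u given the body formula: ↓ gives Terminates u ∧ F, ? gives Terminates u ⇒ F. -/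
def effFm : Eff → Tm → Fm → Fm
  | .tot, u, F => .and (.term u) F
  | .gen, u, F => .imp (.term u) F

/-- Logical translation of types: ⟦T⟧^L u. -/
def logTr : Ty → Tm → Fm
  | .nat, _ => .tru
  | .eq t1 t2, _ => .eq (compile t1) (compile t2)
  | .term t', _ => .term (compile t')
  | .pi θ T T', u =>
      .all (compileTy T)
        (.imp (effFm .tot (.var 0) (logTr (T.liftAt 0) (.var 0)))
              (effFm θ (.app (u.liftAt 0) (.var 0)) (logTr T' (.app (u.liftAt 0) (.var 0)))))
termination_by T _ => T.size
decreasing_by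
  · simp only [Ty.size_liftAt, Ty.size]; omega
  · simp only [Ty.size]; omega

/-- ⟦T⟧^L_θ u. -/
def logTrEff (θ : Eff) (T : Ty) (u : Tm) : Fm := effFm θ u (logTr T u)

/-- Logical translation of contexts ⟦Γ⟧^L. -/
def logCtx : List Ty → List Fm
  | [] => []
  | T :: Γ => logTrEff .tot (T.liftAt 0) (.var 0) :: (logCtx Γ).map (Fm.liftAt 0)

/-! Annotation erasure commutes with shifting and substitution, so every annotated rule erases
to an instance of the corresponding implicit rule; soundness is then a simultaneous induction
over the three annotated judgments. -/

attribute [local simp] eraseTm eraseTy ATm.liftAt ATy.liftAt Tm.liftAt Ty.liftAt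

mutual
  theorem eraseTm_liftAt : ∀ (a : ATm) (c : ℕ), eraseTm (a.liftAt c) = (eraseTm a).liftAt c
    | .var n, c => by by_cases h : n < c <;> simp [h]
    | .app a b, c => by simp [eraseTm_liftAt a, eraseTm_liftAt b]
    | .lam _ _ a, c => by simp [eraseTm_liftAt a]
    | .zero, _ | .join _ _, _ | .terminates _, _ | .contra _ _, _ | .abort _, _ => rfl
    | .suc a, c => by simp [eraseTm_liftAt a]
    | .conv _ a _, c | .reflect a _, c | .inv a _, c => by simp [eraseTm_liftAt a]
    | .fixNat _ a, c | .fix _ _ a, c => by simp [eraseTm_liftAt a]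
    | .case _ a b d, c => by simp [eraseTm_liftAt a, eraseTm_liftAt b, eraseTm_liftAt d]

  theorem eraseTy_liftAt : ∀ (S : ATy) (c : ℕ), eraseTy (S.liftAt c) = (eraseTy S).liftAt c
    | .nat, _ => rfl
    | .pi _ S S', c => by simp [eraseTy_liftAt S, eraseTy_liftAt S']
    | .eq a b, c => by simp [eraseTm_liftAt a, eraseTm_liftAt b]
    | .term a, c => by simp [eraseTm_liftAt a]
end

theorem eraseTy_liftN (n : ℕ) (S : ATy) : eraseTy (S.liftN n) = (eraseTy S).liftN n := by
  induction n generalizing S with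
  | zero => rfl
  | succ n ih =>
    simpa only [ATy.liftN, Ty.liftN, Function.iterate_succ_apply, eraseTy_liftAt] using
      ih (S.liftAt 0)

attribute [local simp] ATm.substAt ATy.substAt Tm.substAt Ty.substAt eraseTm_liftAt

mutual
  theorem eraseTm_substAt : ∀ (a : ATm) (k : ℕ) (s : ATm),
      eraseTm (a.substAt k s) = (eraseTm a).substAt k (eraseTm s)
    | .var n, k, s => by
      by_cases hlt : n < k
      · simp [hlt]
      · by_cases heq : n = k <;> simp [hlt, heq]
    | .app a b, k, s => by simp [eraseTm_substAt a, eraseTm_substAt b]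
    | .lam _ _ a, k, s => by simp [eraseTm_substAt a]
    | .zero, _, _ | .join _ _, _, _ | .terminates _, _, _ | .contra _ _, _, _ | .abort _, _, _ =>
      by simp
    | .suc a, k, s => by simp [eraseTm_substAt a]
    | .conv _ a _, k, s | .reflect a _, k, s | .inv a _, k, s => by simp [eraseTm_substAt a]
    | .fixNat _ a, k, s | .fix _ _ a, k, s => by simp [eraseTm_substAt a]
    | .case _ a b d, k, s => by
      simp [eraseTm_substAt a, eraseTm_substAt b, eraseTm_substAt d]

  theorem eraseTy_substAt : ∀ (S : ATy) (k : ℕ) (s : ATm),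
      eraseTy (S.substAt k s) = (eraseTy S).substAt k (eraseTm s)
    | .nat, _, _ => by simp
    | .pi _ S S', k, s => by simp [eraseTy_substAt S, eraseTy_substAt S']
    | .eq a b, k, s => by simp [eraseTm_substAt a, eraseTm_substAt b]
    | .term a, k, s => by simp [eraseTm_substAt a]
end

theorem eraseTy_pATy : eraseTy pATy = pNatTy := rfl

attribute [local simp] eraseTy_liftAt eraseTy_substAt eraseTy_pATy

mutual
  theorem AOk.erase {Γ : List ATy} : AOk Γ → Ok (Γ.map eraseTy)
    | .empty => .empty
    | .cons hΓ hS => .cons hΓ.erase hS.erase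

  theorem AWfTy.erase {Γ : List ATy} {S : ATy} :
      AWfTy Γ S → WfTy (Γ.map eraseTy) (eraseTy S)
    | .nat hΓ => .nat hΓ.erase
    | .pi _ hS' => .pi hS'.erase
    | .eq ha ha' _ _ => .eq ha.erase ha'.erase
    | .term ha => .term ha.erase

  theorem AHasType.erase {Γ : List ATy} {a : ATm} {S : ATy} {θ : Eff} :
      AHasType Γ a S θ → HasType (Γ.map eraseTy) (eraseTm a) (eraseTy S) θ
    | .var hx hΓ => by
      simpa [eraseTy_liftN] using HasType.var (by simp [hx]) hΓ.erase
    | .join hs hs' ha ha' => .join hs hs' ha.erase ha'.erase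
    | .conv ha hp hS => by
      simpa using HasType.conv (by simpa using ha.erase) hp.erase (by simpa using hS.erase)
    | .reflect ha hp => .reflect ha.erase hp.erase
    | .reify ha => .reify ha.erase
    | .ctxTerm C ha hplug => .ctxTerm C (by simpa [hplug] using ha.erase)
    | .abs ha hS => .abs ha.erase hS.erase
    | .app ha ha' hρ => by simpa using HasType.app ha.erase ha'.erase hρ
    | .zero hΓ => .zero hΓ.erase
    | .suc ha => .suc ha.erase
    | .fix ha => .fix (by simpa using ha.erase)
    | .fixNat ha => .fixNat (by simpa using ha.erase)
    | .case ha ha' ha'' hρ => by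
      simpa using HasType.case ha.erase (by simpa using ha'.erase) (by simpa using ha''.erase) hρ
    | .contra ha => .contra ha.erase
    | .abort hΓ => .abort hΓ.erase
end

/-- **Soundness of the annotated system** (Proposition 1):
if Γ ⊩ a : S θ is derivable, then Γ ⊢ |a| : |S| θ is derivable,
where |·| is annotation erasure (applied to the context as well). -/
theorem annotated_soundness {Γ : List ATy} {a : ATm} {S : ATy} {θ : Eff}
    (h : AHasType Γ a S θ) :
    HasType (Γ.map eraseTy) (eraseTm a) (eraseTy S) θ :=
  h.erase
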